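/- Let K be a finite subset of ℤ and p : K → ℝ. Let φ : ℝ → ℝ have compact support and let c : ℤ → ℝ satisfy ∑_{k∈K} p(k) c(i+k) = 0 for all i ∈ ℤ. Then g(x) = ∑_{i∈ℤ} c(i) φ(x−i) satisfies ∑_{k∈K} p(k) g(x+k) = 0 for all x ∈ ℝ. -/

import Mathlib

/-!
Reindexing by `i = j + k` gives `g (x + k) = ∑ᶠ j, c (j + k) * φ (x - j)`. For fixed `x` only
finitely many `j` contribute, so the finite sum over `K` can be moved inside, where the
coefficient of `φ (x - j)` is `∑ k ∈ K, p k * c (j + k) = 0`.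
-/

open Function Filter

theorem HasCompactSupport.finite_support_comp_sub_intCast {M : Type*} [Zero M] {φ : ℝ → M}
    (hφ : HasCompactSupport φ) (x : ℝ) : (support fun i : ℤ => φ (x - i)).Finite := by
  have hsub : Tendsto (fun i : ℤ => x - (i : ℝ)) cofinite (cocompact ℝ) :=
    Tendsto.comp (Homeomorph.subLeft x).map_cocompact.le Int.tendsto_coe_cofinite
  exact (tendsto_cofinite_cocompact_iff.mp hsub _ hφ).subset fun i hi => subset_tsupport φ hi

theorem Finset.sum_mul_finsum_mul_comm {ι κ R : Type*} [CommSemiring R] (s : Finset κ)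
    (a : κ → R) (b : κ → ι → R) {f : ι → R} (hf : (support f).Finite) :
    ∑ k ∈ s, a k * ∑ᶠ j, b k j * f j = ∑ᶠ j, (∑ k ∈ s, a k * b k j) * f j := by
  have hsupp (h : ι → R) : (support fun j => h j * f j) ⊆ hf.toFinset :=
    (support_mul_subset_right h f).trans hf.coe_toFinset.superset
  simp only [finsum_eq_sum_of_support_subset _ (hsupp _)]
  simp only [Finset.mul_sum, Finset.sum_mul, mul_assoc]
  exact Finset.sum_comm

/-- univariate version of the model-preservation proposition.
If `c : ℤ → ℝ` satisfies the linear model `(K, p)` and `φ` has compact support,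
then `g(x) = ∑_{i∈ℤ} c(i) φ(x−i)` satisfies the model. -/
theorem univariate_model_preservation
    (K : Finset ℤ) (p : ℤ → ℝ) (φ : ℝ → ℝ)
    (hφ : HasCompactSupport φ) (c : ℤ → ℝ)
    (hc : ∀ i : ℤ, ∑ k ∈ K, p k * c (i + k) = 0)
    (g : ℝ → ℝ)
    (hg : ∀ x : ℝ, g x = ∑ᶠ i : ℤ, c i * φ (x - i)) :
    ∀ x : ℝ, ∑ k ∈ K, p k * g (x + k) = 0 := by
  intro x
  have hshift (k : ℤ) : g (x + k) = ∑ᶠ j : ℤ, c (j + k) * φ (x - j) := by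
    rw [hg, ← finsum_comp_equiv (Equiv.addRight k)]
    simp only [Equiv.coe_addRight, Int.cast_add, add_sub_add_right_eq_sub]
  simp only [hshift, Finset.sum_mul_finsum_mul_comm K p _ (hφ.finite_support_comp_sub_intCast x),
    hc, zero_mul, finsum_zero]
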